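/- arXiv:1106.1707 — 2 statements merged into one kernel-verified Lean document; each statement's English description precedes it below -/
import Mathlib

section
/- Under the same hypotheses on Φ, there exists K₀ > 1 such that for all sufficiently large L, all a ∈ [0,1], and all x with Φ(x) ≠ 0, one has |f''(x)| ≤ K₀·L/d_S(x)², where d_S(x) is the distance from x to the zero set S of Φ. -/
/-!
Where `Φ ≠ 0`, `f'' = L (Φ'' Φ - Φ'²) / Φ²`. The numerator is continuous and periodic, hence
bounded. For the denominator, `d_S = O(Φ)` near every point: near a zero `p` because
`d_S(x) ≤ |x - p|` and `Φ'(p) ≠ 0`, elsewhere because `Φ` is bounded away from `0`. Since both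
`d_S` and `Φ` are periodic, compactness of a period interval makes this bound global,
`d_S ≤ C |Φ|`, and so `|f''| ≤ L B C² / d_S²`.
-/

open Asymptotics Filter Function Metric Set Topology

section Asymptotics

variable {𝕜 F : Type*} [NontriviallyNormedField 𝕜] [NormedAddCommGroup F] [NormedSpace 𝕜 F]

theorem HasDerivAt.isBigO_sub_rev {f : 𝕜 → F} {f' : F} {x : 𝕜} (hf : HasDerivAt f f' x)
    (hf' : f' ≠ 0) : (fun y => y - x) =O[𝓝 x] (fun y => f y - f x) :=
  (HasDerivAtFilter.isTheta_sub hf hf').isBigO_symm.comp_tendsto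
    (tendsto_id.prodMk tendsto_const_pure)

theorem isBigO_infDist_zeroSet_nhds {Φ : 𝕜 → F} (hΦ : Continuous Φ)
    (hzero : ∀ x, Φ x = 0 → deriv Φ x ≠ 0) (p : 𝕜) :
    (fun x => infDist x {y | Φ y = 0}) =O[𝓝 p] Φ := by
  by_cases hp : Φ p = 0
  · have hdist : (fun x => infDist x {y | Φ y = 0}) =O[𝓝 p] (· - p) :=
      IsBigO.of_bound 1 <| Eventually.of_forall fun x => by
        simpa [dist_eq_norm, abs_of_nonneg infDist_nonneg] using
          infDist_le_dist_of_mem (x := x) (show p ∈ {y | Φ y = 0} from hp)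
    have hlin : (· - p) =O[𝓝 p] (Φ · - Φ p) :=
      (differentiableAt_of_deriv_ne_zero (hzero p hp)).hasDerivAt.isBigO_sub_rev (hzero p hp)
    simpa only [hp, sub_zero] using hdist.trans hlin
  · have hbdd : (fun x => infDist x {y | Φ y = 0}) =O[𝓝 p] fun _ => Φ p :=
      isBigO_const_of_tendsto ((continuous_infDist_pt _).tendsto p) hp
    have hfar : ∀ᶠ x in 𝓝 p, ‖Φ p‖ / 2 ≤ ‖Φ x‖ :=
      (hΦ.norm.tendsto p).eventually (le_mem_nhds (half_lt_self (norm_pos_iff.2 hp)))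
    exact hbdd.trans ((isBigO_const_left_iff_pos_le_norm hp).2
      ⟨_, half_pos (norm_pos_iff.2 hp), hfar⟩)

end Asymptotics

theorem IsCompact.isBigO_principal_of_forall_isBigO_nhds {X E F : Type*} [TopologicalSpace X]
    [Norm E] [SeminormedAddCommGroup F] {s : Set X} {f : X → E} {g : X → F} (hs : IsCompact s)
    (h : ∀ x ∈ s, f =O[𝓝 x] g) : f =O[𝓟 s] g := by
  refine hs.induction_on (p := fun t => f =O[𝓟 t] g) (by simp)
    (fun _ _ hst ht => ht.mono (principal_mono.2 hst))
    (fun _ _ hs ht => by simpa only [sup_principal] using hs.sup ht) fun x hx => ?_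
  obtain ⟨c, hc⟩ := (h x hx).bound
  exact ⟨_, mem_nhdsWithin_of_mem_nhds hc, isBigO_principal.2 ⟨c, fun _ hy => hy⟩⟩

namespace Function.Periodic

theorem isBigO_top_of_forall_isBigO_nhds {E F : Type*} [Norm E] [SeminormedAddCommGroup F]
    {f : ℝ → E} {g : ℝ → F} {c : ℝ} (hf : Periodic f c) (hg : Periodic g c) (hc : 0 < c)
    (h : ∀ x, f =O[𝓝 x] g) : f =O[⊤] g := by
  obtain ⟨C, hC⟩ := isBigO_principal.1
    (isCompact_Icc.isBigO_principal_of_forall_isBigO_nhds (s := Icc 0 c) fun x _ => h x)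
  refine isBigO_top.2 ⟨C, fun x => ?_⟩
  have hmod := self_sub_toIcoDiv_zsmul hc 0 x
  simpa only [← hmod, hf.sub_zsmul_eq, hg.sub_zsmul_eq] using
    hC _ (Ico_subset_Icc_self (toIcoMod_mem_Ico' hc x))

theorem infDist_preimage {α : Type*} {Φ : ℝ → α} {c : ℝ} (h : Periodic Φ c) (t : Set α) :
    Periodic (fun x => infDist x (Φ ⁻¹' t)) c := by
  intro x
  have himage : (· + c) '' (Φ ⁻¹' t) = Φ ⁻¹' t := by
    ext y
    simp [← sub_eq_add_neg, h.sub_eq]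
  simpa only [himage] using infDist_image (t := Φ ⁻¹' t) (isometry_add_right c)

protected theorem deriv {𝕜 F : Type*} [NontriviallyNormedField 𝕜] [NormedAddCommGroup F]
    [NormedSpace 𝕜 F] {f : 𝕜 → F} {c : 𝕜} (h : Periodic f c) : Periodic (deriv f) c :=
  fun x => by rw [← deriv_comp_add_const, h.funext]

end Function.Periodic

theorem hasDerivAt_add_add_mul_log_abs {Φ : ℝ → ℝ} {z : ℝ} (hΦ : DifferentiableAt ℝ Φ z)
    (hz : Φ z ≠ 0) (a L : ℝ) :
    HasDerivAt (fun y => y + a + L * Real.log |Φ y|) (1 + L * (deriv Φ z / Φ z)) z := by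
  simp only [Real.log_abs]
  exact ((hasDerivAt_id z).add_const a).add ((hΦ.hasDerivAt.log hz).const_mul L)

theorem deriv_deriv_add_add_mul_log_abs {Φ : ℝ → ℝ} {x : ℝ} (hΦ : Differentiable ℝ Φ)
    (hΦ' : DifferentiableAt ℝ (deriv Φ) x) (hx : Φ x ≠ 0) (a L : ℝ) :
    deriv (deriv (fun y => y + a + L * Real.log |Φ y|)) x =
      L * ((deriv (deriv Φ) x * Φ x - deriv Φ x * deriv Φ x) / Φ x ^ 2) := by
  have hderiv : deriv (fun y => y + a + L * Real.log |Φ y|) =ᶠ[𝓝 x]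
      fun y => 1 + L * (deriv Φ y / Φ y) := by
    filter_upwards [hΦ.continuous.continuousAt.eventually_ne hx] with y hy
    exact (hasDerivAt_add_add_mul_log_abs (hΦ y) hy a L).deriv
  rw [hderiv.deriv_eq]
  exact ((hΦ'.hasDerivAt.div (hΦ x).hasDerivAt hx).const_mul L).const_add 1 |>.deriv

theorem abs_mul_div_sq_le_of_le_mul_abs {L N B φ d C : ℝ} (hL : 0 ≤ L) (hN : |N| ≤ B)
    (hd : 0 < d) (hdφ : d ≤ C * |φ|) : |L * (N / φ ^ 2)| ≤ B * C ^ 2 * L / d ^ 2 := by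
  have hφ : 0 < φ ^ 2 := by
    have : φ ≠ 0 := by rintro rfl; simp only [abs_zero, mul_zero] at hdφ; linarith
    positivity
  have hsq : d ^ 2 ≤ C ^ 2 * φ ^ 2 := by
    simpa only [mul_pow, sq_abs] using pow_le_pow_left₀ hd.le hdφ 2
  rw [abs_mul, abs_div, abs_of_nonneg hL, abs_of_pos hφ, mul_div_assoc', div_le_div_iff₀ hφ
    (by positivity)]
  have hB : 0 ≤ B := (abs_nonneg N).trans hN
  calc L * |N| * d ^ 2 ≤ L * B * (C ^ 2 * φ ^ 2) := by gcongr
    _ = B * C ^ 2 * L * φ ^ 2 := by ring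

theorem stmt2_general (Φ : ℝ → ℝ) (hΦ : ContDiff ℝ 2 Φ)
    (hper : ∀ x, Φ (x + 1) = Φ x)
    (hS' : ∀ x, Φ x = 0 → deriv Φ x ≠ 0)
    (hSne : ∃ x, Φ x = 0) :
    ∃ K₀ : ℝ, 1 < K₀ ∧ ∃ L₀ : ℝ, ∀ L : ℝ, L ≥ L₀ →
      ∀ a ∈ Set.Icc (0:ℝ) 1, ∀ x : ℝ, Φ x ≠ 0 →
      |deriv (deriv (fun z => z + a + L * Real.log |Φ z|)) x|
        ≤ K₀ * L / (Metric.infDist x {y : ℝ | Φ y = 0}) ^ 2 := by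
  obtain ⟨hΦ₁, -, hΦ'⟩ := (contDiff_succ_iff_deriv (n := 1)).1 hΦ
  obtain ⟨hΦ₂, -, hΦ''⟩ := (contDiff_succ_iff_deriv (n := 0)).1 hΦ'
  have hper : Periodic Φ 1 := hper
  have hN : Periodic (fun x => deriv (deriv Φ) x * Φ x - deriv Φ x * deriv Φ x) 1 := fun x => by
    simp only [hper x, hper.deriv x, hper.deriv.deriv x]
  obtain ⟨B, hB⟩ := isBounded_iff_forall_norm_le.1 <| hN.isBounded_of_continuous one_ne_zero
    ((hΦ''.continuous.mul hΦ₁.continuous).sub (hΦ₂.continuous.mul hΦ₂.continuous))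
  obtain ⟨C, hC⟩ := isBigO_top.1 <| (hper.infDist_preimage {0}).isBigO_top_of_forall_isBigO_nhds
    hper one_pos (isBigO_infDist_zeroSet_nhds hΦ₁.continuous hS')
  refine ⟨|B| * C ^ 2 + 2, lt_add_of_nonneg_of_lt (by positivity) one_lt_two, 0,
    fun L hL a _ x hx => ?_⟩
  have hd : 0 < infDist x {y | Φ y = 0} :=
    ((isClosed_eq hΦ₁.continuous continuous_const).notMem_iff_infDist_pos hSne).1 hx
  rw [deriv_deriv_add_add_mul_log_abs hΦ₁ (hΦ₂ x) hx]
  refine (abs_mul_div_sq_le_of_le_mul_abs hL ((hB _ (mem_range_self x)).trans (le_abs_self B)) hd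
    ((le_abs_self _).trans (hC x))).trans ?_
  gcongr
  linarith

/-- |f''(x)| ≤ K₀·L/d_S(x)². -/
theorem stmt2 (Φ : ℝ → ℝ) (hΦ : ContDiff ℝ 2 Φ)
    (hper : ∀ x, Φ (x + 1) = Φ x)
    (hS' : ∀ x, Φ x = 0 → deriv Φ x ≠ 0)
    (hC' : ∀ x, deriv Φ x = 0 → deriv (deriv Φ) x ≠ 0)
    (hSne : ∃ x, Φ x = 0) :
    ∃ K₀ : ℝ, 1 < K₀ ∧ ∃ L₀ : ℝ, ∀ L : ℝ, L ≥ L₀ →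
      ∀ a ∈ Set.Icc (0:ℝ) 1, ∀ x : ℝ, Φ x ≠ 0 →
      |deriv (deriv (fun z => z + a + L * Real.log |Φ z|)) x|
        ≤ K₀ * L / (Metric.infDist x {y : ℝ | Φ y = 0}) ^ 2 :=
  stmt2_general Φ hΦ hper hS' hSne
end

section
/- Let L > 1, λ, α ∈ (0,1), and let N be large enough that (1/(αN))·(log 2 + 2) ≤ λα/400 (say). Then for all n sufficiently large, Σ_{q=1}^{⌊2n/(αN)⌋} Σ_{R > λαn/20} M^q · C(n,q) · C(R+q, q) · L^{-R/3} ≤ L^{-λαn/100}, where M is a fixed positive integer and C(·,·) denotes binomial coefficients, provided L is sufficiently large depending on N, M, λ, α. -/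
/-!
Bound `C(R+q, q) ≤ 2^q 2^R`. For `L ≥ 2^24` the remaining series in `R` is dominated by a
geometric series of ratio `L^(-1/24) ≤ 1/2` starting at `L^(-t/4)`, where `t = λαn/20` is the
threshold, so the sum over `R` costs at most `2 L^(-λαn/80)`. By the binomial theorem the sum over
`q` of `C(n,q) (2M)^q` is at most `(1 + 2M)^n`, and once `L ≥ (2(1 + 2M))^(400/(λα))` this
exponential factor is absorbed by `L^(λαn/400)`; finally `λαn/80 - λαn/400 = λαn/100`.
-/

open Finset

theorem sum_choose_mul_pow_le_one_add_pow (s : Finset ℕ) (n : ℕ) {x : ℝ}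
    (hx : 0 ≤ x) : ∑ q ∈ s, (n.choose q : ℝ) * x ^ q ≤ (1 + x) ^ n := by
  have hzero : ∀ q ∈ s ∪ range (n + 1), q ∉ range (n + 1) →
      (n.choose q : ℝ) * x ^ q = 0 :=
    fun q _ hq => by
      rw [Nat.choose_eq_zero_of_lt (by simpa using hq), Nat.cast_zero, zero_mul]
  calc ∑ q ∈ s, (n.choose q : ℝ) * x ^ q
      ≤ ∑ q ∈ s ∪ range (n + 1), (n.choose q : ℝ) * x ^ q :=
        sum_le_sum_of_subset_of_nonneg subset_union_left fun _ _ _ => by positivity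
    _ = ∑ q ∈ range (n + 1), (n.choose q : ℝ) * x ^ q :=
        (sum_subset subset_union_right hzero).symm
    _ = (1 + x) ^ n := by
        rw [add_comm 1 x, add_pow]
        simp only [one_pow, mul_one, mul_comm]

theorem tsum_le_two_mul_of_le_geometric {f : ℕ → ℝ} {C u : ℝ} (hf : ∀ R, 0 ≤ f R)
    (hfu : ∀ R, f R ≤ C * u ^ R) (hu0 : 0 ≤ u) (hu : u ≤ 1 / 2) :
    ∑' R, f R ≤ 2 * C := by
  have hu1 : u < 1 := by linarith
  have hC : 0 ≤ C := by simpa using (hf 0).trans (hfu 0)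
  have hgeom : Summable fun R => C * u ^ R :=
    (summable_geometric_of_lt_one hu0 hu1).mul_left C
  calc ∑' R, f R ≤ ∑' R, C * u ^ R :=
        Summable.tsum_le_tsum hfu (hgeom.of_nonneg_of_le hf hfu) hgeom
    _ = C * (1 - u)⁻¹ := by rw [tsum_mul_left, tsum_geometric_of_lt_one hu0 hu1]
    _ ≤ C * 2 := by
        gcongr
        rw [inv_le_comm₀ (by linarith) two_pos]
        linarith
    _ = 2 * C := mul_comm _ _

theorem rpow_neg_one_div_le_half {L : ℝ} {k : ℕ} (hk : k ≠ 0) (hL : 2 ^ k ≤ L) :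
    L ^ (-1 / k : ℝ) ≤ 1 / 2 := by
  have h2 : (2 : ℝ) ≤ L ^ (1 / k : ℝ) := by
    calc (2 : ℝ) = ((2 : ℝ) ^ k) ^ (1 / k : ℝ) := by
          rw [← Real.rpow_natCast, ← Real.rpow_mul zero_le_two, mul_one_div_cancel (by simpa),
            Real.rpow_one]
      _ ≤ L ^ (1 / k : ℝ) := by gcongr
  rw [neg_div, Real.rpow_neg ((pow_nonneg zero_le_two k).trans hL), one_div (2 : ℝ)]
  exact inv_anti₀ two_pos h2

theorem pow_le_rpow_mul_of_rpow_inv_le {a ε L : ℝ} (ha : 0 ≤ a) (hε : 0 < ε)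
    (hL : a ^ ε⁻¹ ≤ L) (n : ℕ) : a ^ n ≤ L ^ (ε * n) := by
  have haL : a ≤ L ^ ε := by
    calc a = (a ^ ε⁻¹) ^ ε := by
          rw [← Real.rpow_mul ha, inv_mul_cancel₀ hε.ne', Real.rpow_one]
      _ ≤ L ^ ε := by gcongr
  rw [Real.rpow_mul ((Real.rpow_nonneg ha _).trans hL), Real.rpow_natCast]
  gcongr

theorem two_pow_mul_rpow_le_of_lt {L t : ℝ} (hL : 2 ^ 24 ≤ L) {R : ℕ} (hR : t < R) :
    2 ^ R * L ^ (-(R : ℝ) / 3) ≤ L ^ (-t / 4) * (L ^ (-1 / 24 : ℝ)) ^ R := by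
  have hL1 : 1 ≤ L := le_trans (by norm_num) hL
  have hL0 : 0 < L := one_pos.trans_le hL1
  set u := L ^ (-1 / 24 : ℝ)
  have hu : u ≤ 1 / 2 := by
    simpa using rpow_neg_one_div_le_half (k := 24) (by norm_num) (by exact_mod_cast hL)
  have hsplit : L ^ (-(R : ℝ) / 3) = u ^ R * u ^ R * L ^ (-(R : ℝ) / 4) := by
    rw [← Real.rpow_natCast, ← Real.rpow_mul hL0.le, ← Real.rpow_add hL0,
      ← Real.rpow_add hL0]
    ring_nf
  have h2u : (2 * u) ^ R ≤ 1 := pow_le_one₀ (by positivity) (by linarith)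
  have htail : L ^ (-(R : ℝ) / 4) ≤ L ^ (-t / 4) :=
    Real.rpow_le_rpow_of_exponent_le hL1 (by linarith)
  calc 2 ^ R * L ^ (-(R : ℝ) / 3) = (2 * u) ^ R * L ^ (-(R : ℝ) / 4) * u ^ R := by
        rw [hsplit, mul_pow]; ring
    _ ≤ 1 * L ^ (-t / 4) * u ^ R := by gcongr
    _ = L ^ (-t / 4) * u ^ R := by rw [one_mul]

theorem tsum_ite_lt_mul_choose_mul_rpow_le {L t a : ℝ} (hL : 2 ^ 24 ≤ L) (ha : 0 ≤ a)
    (q : ℕ) :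
    ∑' R : ℕ, (if t < (R : ℝ) then a * ((R + q).choose q : ℝ) * L ^ (-(R : ℝ) / 3) else 0)
      ≤ 2 * (a * 2 ^ q * L ^ (-t / 4)) := by
  have hu : L ^ (-1 / 24 : ℝ) ≤ 1 / 2 := by
    simpa using rpow_neg_one_div_le_half (k := 24) (by norm_num) (by exact_mod_cast hL)
  have hL0 : 0 ≤ L := le_trans (by norm_num) hL
  refine tsum_le_two_mul_of_le_geometric (fun R => by split_ifs <;> positivity)
    (fun R => ?_) (by positivity) hu
  split_ifs with hR
  · have hchoose : ((R + q).choose q : ℝ) ≤ 2 ^ q * 2 ^ R := by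
      rw [← pow_add, add_comm]; exact_mod_cast Nat.choose_le_two_pow _ _
    calc a * ((R + q).choose q : ℝ) * L ^ (-(R : ℝ) / 3)
        ≤ a * (2 ^ q * 2 ^ R) * L ^ (-(R : ℝ) / 3) := by gcongr
      _ = a * 2 ^ q * (2 ^ R * L ^ (-(R : ℝ) / 3)) := by ring
      _ ≤ a * 2 ^ q * (L ^ (-t / 4) * (L ^ (-1 / 24 : ℝ)) ^ R) := by
          gcongr ?_ * ?_
          exact two_pow_mul_rpow_le_of_lt hL hR
      _ = _ := by ring
  · positivity

theorem stmt10_general (lam alp : ℝ) (hlam : lam ∈ Set.Ioo (0:ℝ) 1) (halp : alp ∈ Set.Ioo (0:ℝ) 1)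
    (M : ℕ) (N : ℕ) :
    ∃ L₀ : ℝ, ∀ L : ℝ, L ≥ L₀ → ∃ n₀ : ℕ, ∀ n : ℕ, n ≥ n₀ →
      ∑ q ∈ Finset.Icc 1 (Nat.floor (2 * (n : ℝ) / (alp * N))),
        ∑' R : ℕ, (if lam * alp * n / 20 < (R : ℝ) then
            (M : ℝ) ^ q * (n.choose q : ℝ) * (((R + q).choose q : ℝ)) * L ^ (-(R : ℝ) / 3)
          else 0)
      ≤ L ^ (-(lam * alp * n / 100)) := by
  set ε := lam * alp
  have hε : 0 < ε := mul_pos hlam.1 halp.1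
  refine ⟨max (2 ^ 24) ((2 * (1 + 2 * M)) ^ (ε / 400)⁻¹), fun L hL =>
    ⟨1, fun n hn => ?_⟩⟩
  have hL24 : 2 ^ 24 ≤ L := le_of_max_le_left hL
  have hL0 : 0 < L := lt_of_lt_of_le (by norm_num) hL24
  have hgrowth : 2 * (1 + 2 * (M : ℝ)) ^ n ≤ L ^ (ε / 400 * n) :=
    calc 2 * (1 + 2 * (M : ℝ)) ^ n ≤ (2 * (1 + 2 * M)) ^ n := by
          rw [mul_pow]; gcongr; exact le_self_pow₀ one_le_two (by omega)
      _ ≤ L ^ (ε / 400 * n) :=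
          pow_le_rpow_mul_of_rpow_inv_le (by positivity) (by positivity) (le_of_max_le_right hL) n
  set Q := Nat.floor (2 * (n : ℝ) / (alp * N))
  calc _ ≤ ∑ q ∈ Icc 1 Q,
          2 * ((M : ℝ) ^ q * n.choose q * 2 ^ q * L ^ (-(ε * n / 20) / 4)) :=
        sum_le_sum fun q _ => tsum_ite_lt_mul_choose_mul_rpow_le hL24 (by positivity) q
    _ = 2 * (∑ q ∈ Icc 1 Q, (n.choose q : ℝ) * (2 * M) ^ q) * L ^ (-(ε * n / 20) / 4) := by
        rw [mul_sum, sum_mul]; exact sum_congr rfl fun q _ => by ring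
    _ ≤ 2 * (1 + 2 * M) ^ n * L ^ (-(ε * n / 20) / 4) := by
        gcongr; exact sum_choose_mul_pow_le_one_add_pow _ n (by positivity)
    _ ≤ L ^ (ε / 400 * n) * L ^ (-(ε * n / 20) / 4) := by gcongr
    _ = L ^ (-(ε * n / 100)) := by rw [← Real.rpow_add hL0]; ring_nf

/-- the final counting estimate bounding the measure of excluded parameters. -/
theorem stmt10 (lam alp : ℝ) (hlam : lam ∈ Set.Ioo (0:ℝ) 1) (halp : alp ∈ Set.Ioo (0:ℝ) 1)
    (M : ℕ) (hM : 0 < M) (N : ℕ) (hN0 : 0 < N)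
    (hN : (1 / (alp * N)) * (Real.log 2 + 2) ≤ lam * alp / 400) :
    ∃ L₀ : ℝ, ∀ L : ℝ, L ≥ L₀ → ∃ n₀ : ℕ, ∀ n : ℕ, n ≥ n₀ →
      ∑ q ∈ Finset.Icc 1 (Nat.floor (2 * (n : ℝ) / (alp * N))),
        ∑' R : ℕ, (if lam * alp * n / 20 < (R : ℝ) then
            (M : ℝ) ^ q * (n.choose q : ℝ) * (((R + q).choose q : ℝ)) * L ^ (-(R : ℝ) / 3)
          else 0)
      ≤ L ^ (-(lam * alp * n / 100)) :=
  stmt10_general lam alp hlam halp M N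
end
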